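/- arXiv:2307.11691 — 4 statements merged into one kernel-verified Lean document; each statement's English description precedes it below -/
import Mathlib

section
/- Let p be an odd prime, m ≥ 1, and a an integer with p-adic valuation exactly 2λ, where 2λ < m. Write a = p^{2λ} b with gcd(b,p)=1. Then the number of solutions x in Z/p^m Z to x^2 ≡ a (mod p^m) equals (1 + χ(b)) · p^λ, where χ is the Legendre symbol mod p. -/
/-!
A solution of `x² ≡ p^{2λ} b (mod p^{2λ+n})` is divisible by `p^λ`, and `x = p^λ y` is a
solution exactly when `y² ≡ b (mod p^n)`, where `y` is determined modulo `p^{λ+n}`; this gives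
the factor `p^λ` times the number of square roots of `b` modulo `p^n`. As `2` and `b` are units,
reduction modulo `p^n` maps the square roots of `b` modulo `p^{n+1}` bijectively onto those
modulo `p^n` (Hensel's lemma: the kernel of the reduction squares to zero), so that number is the
number of square roots of `b` modulo `p`, which is `1 + χ(b)`.
-/

open Function

section SquareZeroLift

variable {R S : Type*} [CommRing R] [CommRing S]

theorem eq_zero_of_add_sq_eq_sq {x d : R} (h2 : IsUnit (2 : R)) (hx : IsUnit x)
    (hd : d ^ 2 = 0) (h : (x + d) ^ 2 = x ^ 2) : d = 0 := by
  have : 2 * x * d = 0 := by linear_combination h - hd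
  simpa [(h2.mul hx).mul_right_eq_zero] using this

/-- One Newton step `x₀ - e / (2 x₀)` with `e = x₀² - b` is exact, because `e² = 0`. -/
theorem exists_sq_eq_of_sq_sub_sq_eq_zero {x₀ b : R} (h2 : IsUnit (2 : R)) (hb : IsUnit b)
    (he : (x₀ ^ 2 - b) ^ 2 = 0) :
    ∃ t, (x₀ + (x₀ ^ 2 - b) * t) ^ 2 = b := by
  have hnil : IsNilpotent (x₀ ^ 2 - b) := ⟨2, he⟩
  have hx₀ : IsUnit x₀ := by
    refine (isUnit_pow_iff two_ne_zero).mp ?_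
    simpa using hnil.isUnit_add_left_of_commute hb (Commute.all _ _)
  obtain ⟨u, hu⟩ := (h2.mul hx₀).exists_right_inv
  refine ⟨-u, ?_⟩
  linear_combination u ^ 2 * he - (x₀ ^ 2 - b) * hu

theorem ncard_sqrts_eq_of_surjective (f : R →+* S) (hf : Surjective f)
    (hker : ∀ z, f z = 0 → z ^ 2 = 0) (h2 : IsUnit (2 : R)) {b : R} (hb : IsUnit b) :
    {x : R | x ^ 2 = b}.ncard = {y : S | y ^ 2 = f b}.ncard := by
  refine Set.BijOn.ncard_eq (f := f) ⟨fun x (hx : x ^ 2 = b) => ?_, ?_, ?_⟩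
  · show f x ^ 2 = f b
    rw [← map_pow, hx]
  · intro x (hx : x ^ 2 = b) x' (hx' : x' ^ 2 = b) hxx'
    have hx_unit : IsUnit x := (isUnit_pow_iff two_ne_zero).mp (hx ▸ hb)
    have := eq_zero_of_add_sq_eq_sq (d := x' - x) h2 hx_unit (hker _ (by simp [hxx']))
      (by rw [add_sub_cancel, hx, hx'])
    exact (sub_eq_zero.mp this).symm
  · rintro y (hy : y ^ 2 = f b)
    obtain ⟨x₀, rfl⟩ := hf y
    have hker₀ : f (x₀ ^ 2 - b) = 0 := by simp [hy]
    obtain ⟨t, ht⟩ := exists_sq_eq_of_sq_sub_sq_eq_zero h2 hb (hker _ hker₀)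
    exact ⟨_, ht, by simp [hker₀]⟩

end SquareZeroLift

theorem Int.exists_eq_mul_of_sq_mul_dvd_sq_sub {q r c j : ℤ} (hq : q ≠ 0)
    (h : q ^ 2 * r ∣ j ^ 2 - q ^ 2 * c) : ∃ k, j = q * k ∧ r ∣ k ^ 2 - c := by
  have hqj : q ^ 2 ∣ j ^ 2 := by
    have := (dvd_mul_right _ r).trans h
    simpa using this.add (dvd_mul_right (q ^ 2) c)
  obtain ⟨k, rfl⟩ := (Int.pow_dvd_pow_iff two_ne_zero).mp hqj
  refine ⟨k, rfl, (mul_dvd_mul_iff_left (pow_ne_zero 2 hq)).mp ?_⟩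
  rwa [mul_pow, ← mul_sub] at h

theorem AddMonoidHom.ncard_preimage_of_surjective {A B : Type*} [AddGroup A] [AddGroup B]
    [Finite A] {f : A →+ B} (hf : Surjective f) (s : Set B) :
    (f ⁻¹' s).ncard = Nat.card f.ker * s.ncard := by
  classical
  have := Fintype.ofFinite A
  have : Finite B := Finite.of_surjective f hf
  have := Fintype.ofFinite B
  have hfiber : ∀ y, (Finset.univ.filter fun x => f x = y).card = Nat.card f.ker := fun y => by
    rw [← Nat.card_congr (f.fiberEquivKerOfSurjective hf y), ← Set.ncard_coe_finset,
      Nat.card_coe_set_eq]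
    congr 1; ext; simp
  rw [Set.ncard_eq_toFinset_card', Set.ncard_eq_toFinset_card',
    Finset.card_eq_sum_card_fiberwise (f := f) (t := s.toFinset) (fun x hx => by simpa using hx)]
  rw [Finset.sum_congr rfl fun y hy => ?_, Finset.sum_const, smul_eq_mul, mul_comm]
  rw [← hfiber y, Set.mem_toFinset] at *
  congr 1
  ext x
  simp only [Finset.mem_filter, Set.mem_toFinset, Set.mem_preimage, Finset.mem_univ, true_and]
  exact ⟨And.right, fun hx => ⟨hx ▸ hy, hx⟩⟩

namespace ZMod

theorem ncard_preimage_castHom (q r : ℕ) [NeZero q] [NeZero r] (s : Set (ZMod r)) :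
    (castHom (dvd_mul_left r q) (ZMod r) ⁻¹' s).ncard = q * s.ncard := by
  let f : ZMod (q * r) →+ ZMod r := castHom (dvd_mul_left r q) (ZMod r)
  have hcard := AddMonoidHom.ncard_preimage_of_surjective (f := f)
    (castHom_surjective (dvd_mul_left r q))
  have hker : Nat.card f.ker = q := by
    have := hcard Set.univ
    simp only [Set.preimage_univ, Set.ncard_univ, Nat.card_zmod] at this
    exact (Nat.eq_of_mul_eq_mul_right (NeZero.pos r) this).symm
  have h := hcard s
  rwa [hker] at h

theorem sq_intCast_eq_intCast_iff {N : ℕ} (k c : ℤ) :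
    (k : ZMod N) ^ 2 = c ↔ (N : ℤ) ∣ k ^ 2 - c := by
  rw [← Int.cast_pow, intCast_eq_intCast_iff_dvd_sub, ← dvd_neg, neg_sub]

theorem sq_eq_zero_of_castHom_eq_zero {d N : ℕ} (hdN : d ∣ N) (hN : N ∣ d ^ 2) {z : ZMod N}
    (hz : castHom hdN (ZMod d) z = 0) : z ^ 2 = 0 := by
  rw [← intCast_zmod_cast z] at hz ⊢
  rw [map_intCast, intCast_zmod_eq_zero_iff_dvd] at hz
  rw [← Int.cast_pow, intCast_zmod_eq_zero_iff_dvd]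
  exact (Int.natCast_dvd_natCast.mpr hN).trans (by simpa using pow_dvd_pow_of_dvd hz 2)

theorem isUnit_intCast_prime_pow {p : ℕ} (hp : p.Prime) {c : ℤ} (hc : ¬ (p : ℤ) ∣ c)
    (n : ℕ) : IsUnit (c : ZMod (p ^ n)) := by
  rw [coe_int_isUnit_iff_isCoprime, Nat.cast_pow]
  exact ((Nat.prime_iff_prime_int.mp hp).irreducible.coprime_iff_not_dvd.mpr hc).pow_left

theorem ncard_sqrts_sq_mul (q r : ℕ) [NeZero q] (c : ℤ) :
    {x : ZMod (q ^ 2 * r) | x ^ 2 = (((q : ℤ) ^ 2 * c : ℤ) : ZMod (q ^ 2 * r))}.ncard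
      = (castHom (dvd_mul_left r q) (ZMod r) ⁻¹' {z | z ^ 2 = c}).ncard := by
  have hq : (q : ℤ) ≠ 0 := Int.natCast_ne_zero.mpr (NeZero.ne q)
  -- multiplication by `q`, well defined from `ZMod (q * r)` to `ZMod (q ^ 2 * r)`
  let ψ : ZMod (q * r) → ZMod (q ^ 2 * r) := fun y => ((q * (y.cast : ℤ) : ℤ) : ZMod _)
  have hψ : ∀ k : ℤ, ψ k = ((q * k : ℤ) : ZMod _) := fun k => by
    refine (intCast_eq_intCast_iff_dvd_sub _ _ _).mpr ?_
    have := (intCast_eq_intCast_iff_dvd_sub _ _ _).mp (intCast_zmod_cast (k : ZMod (q * r)))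
    rw [← mul_sub, Nat.cast_mul, Nat.cast_pow, sq, mul_assoc]
    exact mul_dvd_mul_left _ (by simpa using this)
  have hmem : ∀ k : ℤ,
      (k : ZMod (q * r)) ∈ castHom (dvd_mul_left r q) (ZMod r) ⁻¹' {z | z ^ 2 = c} ↔
        (r : ℤ) ∣ k ^ 2 - c := fun k => by
    simp [sq_intCast_eq_intCast_iff]
  refine (Set.BijOn.ncard_eq (f := ψ) ⟨?_, ?_, ?_⟩).symm
  · intro y hy
    rw [← intCast_zmod_cast y, hmem] at hy
    rw [← intCast_zmod_cast y, hψ, Set.mem_ofPred_eq, sq_intCast_eq_intCast_iff]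
    push_cast
    rw [mul_pow, ← mul_sub]
    exact mul_dvd_mul_left _ hy
  · intro y _ y' _ h
    rw [← intCast_zmod_cast y, ← intCast_zmod_cast y', hψ, hψ,
      intCast_eq_intCast_iff_dvd_sub] at h
    rw [← intCast_zmod_cast y, ← intCast_zmod_cast y', intCast_eq_intCast_iff_dvd_sub]
    refine (mul_dvd_mul_iff_left hq).mp ?_
    rwa [Nat.cast_mul, ← mul_assoc, ← sq, mul_sub, ← Nat.cast_pow, ← Nat.cast_mul]
  · intro x hx
    rw [← intCast_zmod_cast x, Set.mem_ofPred_eq, sq_intCast_eq_intCast_iff] at hx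
    push_cast at hx
    obtain ⟨k, hk, hkc⟩ := Int.exists_eq_mul_of_sq_mul_dvd_sq_sub hq hx
    exact ⟨k, (hmem k).mpr hkc, by rw [hψ, ← hk, intCast_zmod_cast]⟩

theorem ncard_sqrts_prime_pow {p : ℕ} (hp : p.Prime) (hp2 : p ≠ 2) {b : ℤ}
    (hb : ¬ (p : ℤ) ∣ b) {n : ℕ} (hn : 1 ≤ n) :
    {x : ZMod (p ^ n) | x ^ 2 = b}.ncard = {x : ZMod p | x ^ 2 = b}.ncard := by
  induction n, hn using Nat.le_induction with
  | base => rw [pow_one]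
  | succ n hn ih =>
    have h2 : ¬ (p : ℤ) ∣ 2 := fun h =>
      hp2 <| (Nat.prime_dvd_prime_iff_eq hp Nat.prime_two).mp (by exact_mod_cast h)
    have hsq : p ^ (n + 1) ∣ (p ^ n) ^ 2 := by
      rw [← pow_mul]; exact pow_dvd_pow p (by omega)
    have h := ncard_sqrts_eq_of_surjective (castHom (pow_dvd_pow p n.le_succ) (ZMod (p ^ n)))
      (castHom_surjective _) (fun _ => sq_eq_zero_of_castHom_eq_zero _ hsq)
      (by exact_mod_cast isUnit_intCast_prime_pow hp h2 (n + 1))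
      (isUnit_intCast_prime_pow hp hb (n + 1))
    rwa [map_intCast, ih] at h

end ZMod

theorem stmt_5_general (p : ℕ) [Fact p.Prime] (hp : p ≠ 2) (m : ℕ)
    (a b : ℤ) (lam : ℕ) (hab : a = (p : ℤ) ^ (2 * lam) * b)
    (hb : ¬ (p : ℤ) ∣ b) (hlt : 2 * lam < m) :
    ((Finset.univ.filter fun x : ZMod (p ^ m) => x ^ 2 = (a : ZMod (p ^ m))).card : ℤ)
      = (1 + legendreSym p b) * (p : ℤ) ^ lam := by
  obtain ⟨n, hn, rfl⟩ : ∃ n, 1 ≤ n ∧ m = 2 * lam + n :=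
    ⟨m - 2 * lam, by omega, by omega⟩
  have hmod : p ^ (2 * lam + n) = (p ^ lam) ^ 2 * p ^ n := by ring
  have ha : a = ((p ^ lam : ℕ) : ℤ) ^ 2 * b := by rw [hab]; push_cast; ring
  rw [← Set.ncard_coe_finset, Finset.coe_filter_univ, hmod, ha, ZMod.ncard_sqrts_sq_mul,
    ZMod.ncard_preimage_castHom, ZMod.ncard_sqrts_prime_pow Fact.out hp hb hn]
  push_cast
  rw [Set.ncard_eq_toFinset_card', legendreSym.card_sqrts p hp b]
  ring

theorem stmt_5 (p : ℕ) [Fact p.Prime] (hp : p ≠ 2) (m : ℕ) (hm : 1 ≤ m)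
    (a b : ℤ) (lam : ℕ) (hab : a = (p : ℤ) ^ (2 * lam) * b)
    (hb : ¬ (p : ℤ) ∣ b) (hlt : 2 * lam < m) :
    ((Finset.univ.filter fun x : ZMod (p ^ m) => x ^ 2 = (a : ZMod (p ^ m))).card : ℤ)
      = (1 + legendreSym p b) * (p : ℤ) ^ lam :=
  stmt_5_general p hp m a b lam hab hb hlt
end

section
/- Let p be an odd prime and m ≥ 1. For every k in Z/p^m Z, the number of triples (x,y,z) in (Z/p^m Z)^3 with x^2 + y^2 + z^2 ≡ k (mod p^m) is divisible by p^m. -/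
/-!
Since `-1` is a sum of two squares modulo `p`, hence (Hensel, `p` odd) modulo `p ^ m`, and `2`
is a unit, the form `x² + y² + z²` is equivalent over `ZMod (p ^ m)` to `uv - w²`. In any finite
commutative ring `R`, the number of `(v, w)` with `uv = c + w²` is divisible by `|R|`: for fixed
`w` there are `|ker (u * ·)|` solutions `v` if `u ∣ c + w²` and none otherwise, and the set of
such `w` is a union of cosets of the ideal `(u)`, because `(w + ut)² ≡ w² mod (u)`. As
`|ker (u * ·)| * |(u)| = |R|`, the count is `|R|` times the number of these cosets.
-/

open Finset

section FiberCount

variable {G M : Type*} [AddGroup G] [Fintype G] [AddMonoid M] [DecidableEq M]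

theorem AddMonoidHom.card_fiber_eq_ite (f : G →+ M) (y : M) :
    #{g | f g = y} = if y ∈ univ.image f then #{g | f g = 0} else 0 := by
  split_ifs with hy
  · obtain ⟨g, -, rfl⟩ := mem_image.mp hy
    exact card_fiber_eq_of_mem_range f ⟨g, rfl⟩ ⟨0, map_zero f⟩
  · rw [card_eq_zero, filter_eq_empty_iff]
    rintro g - rfl
    exact hy (mem_image_of_mem f (mem_univ g))

theorem AddMonoidHom.sum_card_fiber {ι : Type*} (f : G →+ M) (s : Finset ι) (h : ι → M) :
    ∑ i ∈ s, #{g | f g = h i} = #{i ∈ s | h i ∈ univ.image f} * #{g | f g = 0} := by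
  rw [sum_congr rfl fun i _ => f.card_fiber_eq_ite (h i), ← sum_filter, sum_const, smul_eq_mul]

theorem AddMonoidHom.card_filter_apply_mem (f : G →+ M) (T : Finset M) :
    #{g | f g ∈ T} = #{y ∈ T | y ∈ univ.image f} * #{g | f g = 0} := by
  rw [card_eq_sum_card_fiberwise (f := f) (t := T) (by intro g hg; simpa using hg),
    ← f.sum_card_fiber T fun y => y]
  refine sum_congr rfl fun y hy => ?_
  rw [filter_filter]
  exact congrArg card (filter_congr fun g _ => ⟨And.right, fun h => ⟨h ▸ hy, h⟩⟩)

theorem AddMonoidHom.card_filter_apply_eq {ι : Type*} [Fintype ι] (f : G →+ M) (h : ι → M) :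
    #{x : G × ι | f x.1 = h x.2} = #{i | h i ∈ univ.image f} * #{g | f g = 0} := by
  rw [← f.sum_card_fiber, card_filter, Fintype.sum_prod_type_right]
  simp only [card_filter]

theorem AddMonoidHom.card_eq_card_image_mul (f : G →+ M) :
    Fintype.card G = #(univ.image f) * #{g | f g = 0} := by
  simpa [filter_true_of_mem] using f.card_filter_apply_mem (univ.image f)

end FiberCount

theorem card_dvd_card_mul_eq_add_sq {R : Type*} [CommRing R] [Fintype R] [DecidableEq R]
    (u c : R) : Fintype.card R ∣ #{x : R × R | u * x.1 = c + x.2 ^ 2} := by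
  classical
  let f := AddMonoidHom.mulLeft u
  let π := Ideal.Quotient.mk (Ideal.span {u})
  have mem_range_iff (y : R) : y ∈ univ.image f ↔ π y = 0 := by
    rw [Ideal.Quotient.eq_zero_iff_dvd]
    simpa [f, Dvd.dvd] using exists_congr fun v => eq_comm
  let T : Finset (R ⧸ Ideal.span {u}) := {q | π c + q ^ 2 = 0}
  have hS : #{x : R × R | u * x.1 = c + x.2 ^ 2} = #{w | π w ∈ T} * #{v | f v = 0} := by
    refine (f.card_filter_apply_eq fun w => c + w ^ 2).trans ?_
    congr 2
    ext w
    simp [T, mem_range_iff]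
  have hW : #{w | π w ∈ T} = #T * #{w | π w = 0} := by
    refine (π.toAddMonoidHom.card_filter_apply_mem T).trans ?_
    congr 2
    exact filter_true_of_mem fun q _ => by simpa using Ideal.Quotient.mk_surjective q
  have hR : Fintype.card R = #{w | π w = 0} * #{v | f v = 0} := by
    rw [f.card_eq_card_image_mul]
    congr 2
    ext w
    rw [mem_range_iff]
    simp
  rw [hS, hW, mul_assoc, ← hR]
  exact dvd_mul_left _ _

theorem card_sum_three_sq_eq_card_mul_eq_add_sq {R : Type*} [CommRing R] [Fintype R]
    [DecidableEq R] {a b : R} (hab : a ^ 2 + b ^ 2 = -1) (h2 : IsUnit (2 : R)) (k : R) :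
    #{x : R × R × R | x.1 ^ 2 + x.2.1 ^ 2 + x.2.2 ^ 2 = k} =
      #{x : R × R × R | x.1 * x.2.1 = k + x.2.2 ^ 2} := by
  obtain ⟨h, h2h⟩ := h2.exists_right_inv
  -- with `ℓ = ax + by` and `w = ay - bx` one has `ℓ² + w² = (a² + b²)(x² + y²) = -(x² + y²)`,
  -- so `x² + y² + z² = (z - ℓ)(z + ℓ) - w²`
  apply card_nbij'
    (fun x => (x.2.2 - (a * x.1 + b * x.2.1), x.2.2 + (a * x.1 + b * x.2.1), a * x.2.1 - b * x.1))
    (fun x => (b * x.2.2 - a * h * (x.2.1 - x.1), -(b * h * (x.2.1 - x.1) + a * x.2.2),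
      h * (x.1 + x.2.1)))
  · rintro ⟨x, y, z⟩ hx
    simp only [coe_filter, mem_univ, true_and, Set.mem_ofPred_eq] at hx ⊢
    linear_combination hx - (x ^ 2 + y ^ 2) * hab
  · rintro ⟨s, d, w⟩ hx
    simp only [coe_filter, mem_univ, true_and, Set.mem_ofPred_eq] at hx ⊢
    linear_combination (w ^ 2 + h ^ 2 * (d - s) ^ 2) * hab + (2 * h + 1) * s * d * h2h + hx
  · rintro ⟨x, y, z⟩ -
    simp only [Prod.mk.injEq]
    refine ⟨?_, ?_, ?_⟩
    · linear_combination (-x) * hab - a * (a * x + b * y) * h2h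
    · linear_combination (-y) * hab - b * (a * x + b * y) * h2h
    · linear_combination z * h2h
  · rintro ⟨s, d, w⟩ -
    simp only [Prod.mk.injEq]
    refine ⟨?_, ?_, ?_⟩
    · linear_combination s * h2h + h * (d - s) * hab
    · linear_combination d * h2h - h * (d - s) * hab
    · linear_combination (-w) * hab

theorem Int.exists_lift_sq_add_sq_add_one_dvd {p a b : ℤ} {m : ℕ} (ha : IsCoprime (2 * a) p)
    (h : p ^ (m + 1) ∣ a ^ 2 + b ^ 2 + 1) :
    ∃ a', IsCoprime (2 * a') p ∧ p ^ (m + 2) ∣ a' ^ 2 + b ^ 2 + 1 := by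
  obtain ⟨s, hs⟩ := h
  obtain ⟨x, y, hxy⟩ := id ha
  -- `x` inverts `2a` mod `p`, so the correction cancels the error `p ^ (m + 1) * s`
  refine ⟨a - s * x * p ^ (m + 1), ?_, s * y + s ^ 2 * x ^ 2 * p ^ m, ?_⟩
  · have h2a' : 2 * (a - s * x * p ^ (m + 1)) = 2 * a + p * (-2 * s * x * p ^ m) := by ring
    exact h2a' ▸ ha.add_mul_left_left _
  · linear_combination hs - s * p ^ (m + 1) * hxy

theorem Int.exists_sq_add_sq_add_one_dvd_prime_pow {p : ℕ} [Fact p.Prime] (hp : p ≠ 2)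
    (m : ℕ) :
    ∃ a b : ℤ, IsCoprime (2 * a) p ∧ (p : ℤ) ^ (m + 1) ∣ a ^ 2 + b ^ 2 + 1 := by
  have pp : p.Prime := Fact.out
  induction m with
  | zero =>
    obtain ⟨a, b, ha, hab⟩ : ∃ a b : ZMod p, a ≠ 0 ∧ a ^ 2 + b ^ 2 = -1 := by
      obtain ⟨a, b, hab⟩ := ZMod.sq_add_sq p (-1)
      by_cases ha : a = 0
      · refine ⟨b, a, ?_, by linear_combination hab⟩
        rintro rfl
        subst ha
        simp at hab
      · exact ⟨a, b, ha, hab⟩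
    obtain ⟨A, rfl⟩ := ZMod.intCast_surjective a
    obtain ⟨B, rfl⟩ := ZMod.intCast_surjective b
    refine ⟨A, B, IsCoprime.mul_left ?_ ?_, ?_⟩
    · exact Nat.isCoprime_iff_coprime.mpr (Nat.coprime_two_left.mpr (pp.odd_of_ne_two hp))
    · rw [isCoprime_comm, (Nat.prime_iff_prime_int.mp pp).coprime_iff_not_dvd,
        ← ZMod.intCast_zmod_eq_zero_iff_dvd]
      exact ha
    · rw [pow_one, ← ZMod.intCast_zmod_eq_zero_iff_dvd]
      push_cast
      linear_combination hab
  | succ m ih =>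
    obtain ⟨a, b, ha, h⟩ := ih
    obtain ⟨a', ha', h'⟩ := Int.exists_lift_sq_add_sq_add_one_dvd ha h
    exact ⟨a', b, ha', h'⟩

theorem ZMod.exists_sq_add_sq_eq_neg_one {p : ℕ} [Fact p.Prime] (hp : p ≠ 2) (m : ℕ) :
    ∃ a b : ZMod (p ^ m), a ^ 2 + b ^ 2 = -1 := by
  cases m with
  | zero =>
    rw [pow_zero]
    exact ⟨0, 0, Subsingleton.elim _ _⟩
  | succ m =>
    obtain ⟨a, b, -, h⟩ := Int.exists_sq_add_sq_add_one_dvd_prime_pow hp m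
    refine ⟨a, b, ?_⟩
    have h0 : ((a ^ 2 + b ^ 2 + 1 : ℤ) : ZMod (p ^ (m + 1))) = 0 :=
      (ZMod.intCast_zmod_eq_zero_iff_dvd _ _).mpr (by exact_mod_cast h)
    push_cast at h0
    linear_combination h0

theorem ZMod.isUnit_two_of_odd {n : ℕ} (hn : Odd n) : IsUnit (2 : ZMod n) := by
  simpa using (ZMod.isUnit_iff_coprime 2 n).mpr (Nat.coprime_two_left.mpr hn)

theorem stmt_11_general (p : ℕ) [Fact p.Prime] (hp : p ≠ 2) (m : ℕ)
    (k : ZMod (p ^ m)) :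
    p ^ m ∣ (Finset.univ.filter fun v : ZMod (p ^ m) × ZMod (p ^ m) × ZMod (p ^ m) =>
      v.1 ^ 2 + v.2.1 ^ 2 + v.2.2 ^ 2 = k).card := by
  have pp : p.Prime := Fact.out
  have : NeZero (p ^ m) := ⟨pow_ne_zero m pp.ne_zero⟩
  obtain ⟨a, b, hab⟩ := ZMod.exists_sq_add_sq_eq_neg_one hp m
  have h2 : IsUnit (2 : ZMod (p ^ m)) := ZMod.isUnit_two_of_odd ((pp.odd_of_ne_two hp).pow)
  rw [card_sum_three_sq_eq_card_mul_eq_add_sq hab h2 k, card_filter, Fintype.sum_prod_type]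
  refine dvd_sum fun u _ => ?_
  simpa only [ZMod.card, card_filter] using card_dvd_card_mul_eq_add_sq u k

theorem stmt_11 (p : ℕ) [Fact p.Prime] (hp : p ≠ 2) (m : ℕ) (hm : 1 ≤ m)
    (k : ZMod (p ^ m)) :
    p ^ m ∣ (Finset.univ.filter fun v : ZMod (p ^ m) × ZMod (p ^ m) × ZMod (p ^ m) =>
      v.1 ^ 2 + v.2.1 ^ 2 + v.2.2 ^ 2 = k).card :=
  stmt_11_general p hp m k
end

section
/- For every m ≥ 1 and every k in Z/2^m Z, the number of pairs (x,y) in (Z/2^m Z)^2 with x^2 + y^2 ≡ k (mod 2^m) is divisible by 2^m. -/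
/-!
Write `S_n(k)` for the number of solutions of `x² + y² = k` in `ℤ/2ⁿ`. Reduction mod `2ⁿ⁻¹` is
4-to-1 on pairs and the fibre of `k` is `{k, k + 2ⁿ⁻¹}`, so `S_n(k) + S_n(k + 2ⁿ⁻¹) = 4 S_{n-1}(k)`.
Multiplying `(x, y)` as a Gaussian integer by `a + bi` with `u = a² + b²` a unit maps the
solutions for `k` bijectively onto those for `u k`. For `n ≥ 4` and `4 ∤ k` some such `u` satisfies
`u k = k + 2ⁿ⁻¹` (`a = 1 + 2ⁿ⁻², b = 0` for odd `k`; `a = 1 + 2ⁿ⁻³, b = 2ⁿ⁻³` for `k ≡ 2 mod 4`),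
hence `S_n(k) = 2 S_{n-1}(k)`. If `k = 4c`, every solution is a pair of even residues; counting the
pairs `q` with `4 (q₁² + q₂²) = 4c` once through the 4-to-1 doubling map and once through
reduction mod `2ⁿ⁻²` gives `S_n(4c) = 4 S_{n-2}(c)`. Induction from `n ≤ 3`, which is computed.
-/

open Finset

section SumOfTwoSquares

variable {R : Type*} [CommRing R] [Fintype R] [DecidableEq R]

variable (R) in
def sumSqCount (k : R) : ℕ :=
  #{p : R × R | p.1 ^ 2 + p.2 ^ 2 = k}

theorem sumSqCount_sq_add_sq_mul {a b : R} (hu : IsUnit (a ^ 2 + b ^ 2)) (k : R) :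
    sumSqCount R ((a ^ 2 + b ^ 2) * k) = sumSqCount R k := by
  set u := a ^ 2 + b ^ 2
  let g : R × R → R × R := fun p => (a * p.1 - b * p.2, a * p.2 + b * p.1)
  have hinj : Function.Injective g := by
    intro p q hpq
    have hconj : ∀ p, a * (g p).1 + b * (g p).2 = u * p.1 ∧
        a * (g p).2 - b * (g p).1 = u * p.2 := fun p => ⟨by ring, by ring⟩
    ext <;> apply hu.mul_left_cancel
    · rw [← (hconj p).1, ← (hconj q).1, hpq]
    · rw [← (hconj p).2, ← (hconj q).2, hpq]
  symm
  refine card_equiv (Equiv.ofBijective g (Finite.injective_iff_bijective.mp hinj)) fun p => ?_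
  have hnorm : (g p).1 ^ 2 + (g p).2 ^ 2 = u * (p.1 ^ 2 + p.2 ^ 2) := by ring
  simp only [mem_filter, mem_univ, true_and, Equiv.ofBijective_apply, hnorm, hu.mul_right_inj]

end SumOfTwoSquares

theorem AddMonoidHom.card_filter_comp {G H : Type*} [AddGroup G] [Fintype G] [AddMonoid H]
    [DecidableEq H] (f : G →+ H) (P : H → Prop) [DecidablePred P] :
    #{g | P (f g)} = #{g | f g = 0} * #{h ∈ univ.image f | P h} := by
  rw [card_eq_sum_card_fiberwise (f := f) (t := {h ∈ univ.image f | P h})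
    (fun g hg => by simp_all), sum_const_nat, mul_comm]
  intro h hh
  obtain ⟨⟨g, -, rfl⟩, hP⟩ := by simpa only [mem_filter, mem_image] using hh
  rw [filter_filter, filter_congr fun x _ => and_iff_right_of_imp fun hx : f x = f g => hx ▸ hP]
  exact card_fiber_eq_of_mem_range f ⟨g, rfl⟩ ⟨0, map_zero f⟩

theorem ZMod.card_filter_castHom_prodMap {m M : ℕ} [NeZero m] [NeZero M] (hmM : m ∣ M)
    (P : ZMod m × ZMod m → Prop) [DecidablePred P] :
    #{p : ZMod M × ZMod M | P (castHom hmM _ p.1, castHom hmM _ p.2)} * m ^ 2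
      = M ^ 2 * #{q | P q} := by
  let f := ((castHom hmM (ZMod m)).prodMap (castHom hmM (ZMod m))).toAddMonoidHom
  have hf : univ.image f = univ := by
    refine image_univ_of_surjective ?_
    exact (ringHom_surjective (castHom hmM (ZMod m))).prodMap (ringHom_surjective (castHom hmM _))
  have hP : #{p : ZMod M × ZMod M | P (castHom hmM _ p.1, castHom hmM _ p.2)} = _ :=
    f.card_filter_comp P
  have hker := f.card_filter_comp fun _ => True
  simp only [filter_true, hf, card_univ, Fintype.card_prod, ZMod.card] at hP hker
  rw [show M ^ 2 = M * M by ring, hker, hP]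
  ring

namespace ZMod

abbrev twoPowCastHom (n d : ℕ) : ZMod (2 ^ (n + d)) →+* ZMod (2 ^ n) :=
  castHom (pow_dvd_pow 2 (n.le_add_right d)) _

theorem card_filter_twoPowCastHom (n d : ℕ) (P : ZMod (2 ^ n) × ZMod (2 ^ n) → Prop)
    [DecidablePred P] :
    #{p : ZMod (2 ^ (n + d)) × ZMod (2 ^ (n + d)) |
      P (twoPowCastHom n d p.1, twoPowCastHom n d p.2)} = 4 ^ d * #{q | P q} := by
  have h := card_filter_castHom_prodMap (pow_dvd_pow 2 (n.le_add_right d)) P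
  have e : (2 ^ (n + d)) ^ 2 = 4 ^ d * (2 ^ n) ^ 2 := by
    rw [pow_add, mul_pow, pow_right_comm 2 d 2]
    ring
  refine Nat.eq_of_mul_eq_mul_right (by positivity : 0 < (2 ^ n) ^ 2) ?_
  calc _ = _ := h
    _ = _ := by rw [e]; ring

theorem two_pow_mul_eq_zero_iff {n d : ℕ} (x : ZMod (2 ^ (n + d))) :
    2 ^ d * x = 0 ↔ twoPowCastHom n d x = 0 := by
  have hx : (2 : ZMod (2 ^ (n + d))) ^ d * x = ((2 ^ d * x.val : ℕ) : ZMod (2 ^ (n + d))) := by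
    push_cast
    rw [natCast_zmod_val]
  conv_rhs => rw [← natCast_zmod_val x, map_natCast]
  rw [hx, natCast_eq_zero_iff, natCast_eq_zero_iff]
  generalize x.val = v
  rw [pow_add, mul_comm (2 ^ n), Nat.mul_dvd_mul_iff_left (by positivity)]

theorem twoPowCastHom_eq_zero_iff {n : ℕ} (x : ZMod (2 ^ (n + 1))) :
    twoPowCastHom n 1 x = 0 ↔ x = 0 ∨ x = 2 ^ n := by
  constructor
  · rw [← natCast_zmod_val x, map_natCast, natCast_eq_zero_iff]
    rintro ⟨j, hj⟩
    have hj2 : j < 2 := by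
      have := x.val_lt
      rw [hj, pow_succ] at this
      exact Nat.lt_of_mul_lt_mul_left this
    interval_cases j <;> simp [hj]
  · rintro (rfl | rfl)
    · exact map_zero _
    · rw [map_pow, map_ofNat]
      exact_mod_cast natCast_self (2 ^ n)

theorem two_pow_ne_zero (n : ℕ) : (2 : ZMod (2 ^ (n + 1))) ^ n ≠ 0 := by
  have : ((2 ^ n : ℕ) : ZMod (2 ^ (n + 1))) ≠ 0 := by
    rw [Ne, natCast_eq_zero_iff, Nat.pow_dvd_pow_iff_le_right (by norm_num)]
    omega
  exact_mod_cast this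

theorem even_of_sq_add_sq_eq_four_mul {n : ℕ} {x y c : ZMod (2 ^ (n + 2))}
    (h : x ^ 2 + y ^ 2 = 4 * c) : Even x := by
  let π : ZMod (2 ^ (n + 2)) →+* ZMod 4 := castHom ⟨2 ^ n, by ring⟩ _
  have hπ : (π x).val = x.val % 4 := by
    conv_lhs => rw [← natCast_zmod_val x, map_natCast]
    rw [val_natCast]
  have key : ∀ a b : ZMod 4, a ^ 2 + b ^ 2 = 0 → a.val % 2 = 0 := by decide
  have hx : x.val % 2 = 0 := by
    have h4 := congrArg π h
    rw [map_add, map_pow, map_pow, map_mul, map_ofNat, show (4 : ZMod 4) = 0 from rfl,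
      zero_mul] at h4
    have := key _ _ h4
    omega
  refine ⟨(x.val / 2 : ℕ), ?_⟩
  conv_lhs => rw [← natCast_zmod_val x, ← Nat.mul_div_cancel' (Nat.dvd_of_mod_eq_zero hx)]
  push_cast
  ring

theorem four_mul_eq_four_mul_iff {n : ℕ} (x y : ZMod (2 ^ (n + 2))) :
    4 * x = 4 * y ↔ twoPowCastHom n 2 x = twoPowCastHom n 2 y := by
  rw [← sub_eq_zero, ← mul_sub, ← sub_eq_zero (b := twoPowCastHom n 2 y), ← map_sub,
    ← two_pow_mul_eq_zero_iff]
  norm_num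

theorem card_filter_two_mul_eq_zero (n : ℕ) :
    #{q : ZMod (2 ^ (n + 1)) × ZMod (2 ^ (n + 1)) | 2 * q = 0} = 4 := by
  have h := card_filter_twoPowCastHom n 1 (· = 0)
  simp only [filter_eq', mem_univ, if_true, card_singleton, pow_one, mul_one] at h
  rw [← h]
  congr 1
  ext q
  simp only [mem_filter, mem_univ, true_and, Prod.ext_iff, Prod.fst_mul, Prod.snd_mul,
    Prod.fst_ofNat, Prod.snd_ofNat, Prod.fst_zero, Prod.snd_zero, ← two_pow_mul_eq_zero_iff,
    pow_one]

end ZMod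

open ZMod

theorem sumSqCount_add_sumSqCount_add_two_pow (n : ℕ) (k : ZMod (2 ^ (n + 1))) :
    sumSqCount _ k + sumSqCount _ (k + 2 ^ n) = 4 * sumSqCount _ (twoPowCastHom n 1 k) := by
  have hfiber : ∀ t, twoPowCastHom n 1 t = twoPowCastHom n 1 k ↔ t = k ∨ t = k + 2 ^ n := by
    intro t
    rw [← sub_eq_zero, ← map_sub, twoPowCastHom_eq_zero_iff, sub_eq_zero, sub_eq_iff_eq_add']
  have hdisj : ∀ p ∈ (univ : Finset (ZMod (2 ^ (n + 1)) × ZMod (2 ^ (n + 1)))),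
      p.1 ^ 2 + p.2 ^ 2 = k → p.1 ^ 2 + p.2 ^ 2 ≠ k + 2 ^ n := by
    intro p _ hk hk'
    exact two_pow_ne_zero n (by rw [hk] at hk'; simpa using hk')
  rw [sumSqCount, sumSqCount, ← card_union_of_disjoint (disjoint_filter.2 hdisj), ← filter_or]
  simp_rw [← hfiber, map_add, map_pow]
  exact card_filter_twoPowCastHom n 1 fun q => q.1 ^ 2 + q.2 ^ 2 = twoPowCastHom n 1 k

theorem sumSqCount_add_two_pow_eq (j : ℕ) (k : ZMod (2 ^ (j + 4))) (hk : ¬ 4 ∣ k.val) :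
    sumSqCount _ (k + 2 ^ (j + 3)) = sumSqCount _ k := by
  have h2 : (2 : ZMod (2 ^ (j + 4))) ^ (j + 4) = 0 := by exact_mod_cast natCast_self (2 ^ (j + 4))
  have hunit (t : ZMod (2 ^ (j + 4))) : IsUnit (1 + 2 * t) :=
    IsNilpotent.isUnit_one_add ⟨j + 4, by rw [mul_pow, h2, zero_mul]⟩
  obtain ⟨a, b, hab, hmul⟩ : ∃ a b : ZMod (2 ^ (j + 4)),
      IsUnit (a ^ 2 + b ^ 2) ∧ (a ^ 2 + b ^ 2) * k = k + 2 ^ (j + 3) := by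
    rw [← natCast_zmod_val k]
    obtain ⟨i, hi⟩ | ⟨i, hi⟩ : (∃ i, k.val = 2 * i + 1) ∨ ∃ i, k.val = 4 * i + 2 := by
      by_cases hodd : k.val % 2 = 1
      exacts [.inl ⟨k.val / 2, by omega⟩, .inr ⟨k.val / 4, by omega⟩]
    · refine ⟨1 + 2 ^ (j + 2), 0,
        by convert hunit (2 ^ (j + 2) + 2 ^ (2 * j + 3)) using 1; ring, ?_⟩
      rw [hi]
      push_cast
      linear_combination (i + 2 ^ j * (2 * i + 1)) * h2
    · refine ⟨1 + 2 ^ (j + 1), 2 ^ (j + 1),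
        by convert hunit (2 ^ (j + 1) + 2 ^ (2 * j + 2)) using 1; ring, ?_⟩
      rw [hi]
      push_cast
      linear_combination (i + 2 ^ (j + 1) * i + 2 ^ j) * h2
  rw [← hmul, sumSqCount_sq_add_sq_mul hab]

theorem sumSqCount_four_mul (n : ℕ) (c : ZMod (2 ^ (n + 2))) :
    sumSqCount _ (4 * c) = 4 * sumSqCount _ (twoPowCastHom n 2 c) := by
  let double := AddMonoidHom.mulLeft (2 : ZMod (2 ^ (n + 2)) × ZMod (2 ^ (n + 2)))
  have hdouble (q) : double q = (2 * q.1, 2 * q.2) := rfl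
  have hrange (p : ZMod (2 ^ (n + 2)) × ZMod (2 ^ (n + 2))) (hp : p.1 ^ 2 + p.2 ^ 2 = 4 * c) :
      p ∈ univ.image double := by
    obtain ⟨r, hr⟩ := even_of_sq_add_sq_eq_four_mul hp
    obtain ⟨s, hs⟩ := even_of_sq_add_sq_eq_four_mul ((add_comm _ _).trans hp)
    exact mem_image.2 ⟨(r, s), mem_univ _, by rw [hdouble, two_mul, two_mul, ← hr, ← hs]⟩
  have hq (q : ZMod (2 ^ (n + 2)) × ZMod (2 ^ (n + 2))) :
      (double q).1 ^ 2 + (double q).2 ^ 2 = 4 * (q.1 ^ 2 + q.2 ^ 2) := by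
    rw [hdouble]
    ring
  have h1 : #{q | (double q).1 ^ 2 + (double q).2 ^ 2 = 4 * c} = 4 * sumSqCount _ (4 * c) := by
    rw [double.card_filter_comp (fun p => p.1 ^ 2 + p.2 ^ 2 = 4 * c),
      show #{q | double q = 0} = 4 from card_filter_two_mul_eq_zero (n + 1), sumSqCount]
    congr 2
    ext p
    simp only [mem_filter, mem_univ, true_and]
    exact and_iff_right_of_imp (hrange p)
  have h2 : #{q | (double q).1 ^ 2 + (double q).2 ^ 2 = 4 * c}
      = 16 * sumSqCount _ (twoPowCastHom n 2 c) := by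
    simp_rw [hq, four_mul_eq_four_mul_iff, map_add, map_pow]
    exact (card_filter_twoPowCastHom n 2 fun q => q.1 ^ 2 + q.2 ^ 2 = twoPowCastHom n 2 c).trans
      (by norm_num [sumSqCount])
  omega

theorem two_pow_dvd_sumSqCount (n : ℕ) :
    ∀ k : ZMod (2 ^ (n + 1)), 2 ^ (n + 1) ∣ sumSqCount _ k := by
  induction n using Nat.strong_induction_on with
  | _ n ih =>
    obtain _ | _ | _ | j := n
    · decide
    · decide
    · decide
    show ∀ k : ZMod (2 ^ (j + 4)), 2 ^ (j + 4) ∣ sumSqCount _ k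
    intro k
    by_cases h4 : 4 ∣ k.val
    · obtain ⟨c, rfl⟩ : ∃ c, k = 4 * c := ⟨(k.val / 4 : ℕ), by
        conv_lhs => rw [← natCast_zmod_val k, ← Nat.mul_div_cancel' h4]
        push_cast; rfl⟩
      rw [sumSqCount_four_mul (j + 2) c]
      calc 2 ^ (j + 4) = 4 * 2 ^ (j + 2) := by ring
        _ ∣ _ := mul_dvd_mul_left 4 (ih (j + 1) (by omega) _)
    · have h : sumSqCount _ k + sumSqCount _ (k + 2 ^ (j + 3))
          = 4 * sumSqCount _ (twoPowCastHom (j + 3) 1 k) :=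
        sumSqCount_add_sumSqCount_add_two_pow (j + 3) k
      rw [sumSqCount_add_two_pow_eq j k h4] at h
      calc 2 ^ (j + 4) = 2 * 2 ^ (j + 3) := by ring
        _ ∣ 2 * sumSqCount _ (twoPowCastHom (j + 3) 1 k) :=
          mul_dvd_mul_left 2 (ih (j + 2) (by omega) _)
        _ = sumSqCount _ k := by omega

theorem stmt_12 (m : ℕ) (hm : 1 ≤ m) (k : ZMod (2 ^ m)) :
    2 ^ m ∣ (Finset.univ.filter fun xy : ZMod (2 ^ m) × ZMod (2 ^ m) =>
      xy.1 ^ 2 + xy.2 ^ 2 = k).card := by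
  obtain ⟨n, rfl⟩ := Nat.exists_eq_add_of_le' hm
  exact two_pow_dvd_sumSqCount n k
end

section
/- For every m ≥ 1 and every k in Z/2^m Z, the number of triples (x,y,z) in (Z/2^m Z)^3 with x^2 + y^2 + z^2 ≡ k (mod 2^m) is divisible by 2^m. -/
/-!
Write `N_n(k)` for the number of solutions of `x² + y² + z² = k` in `ZMod n`. Reduction modulo `n`
is `8`-to-`1` on triples modulo `2n`, and it sends `x² + y² + z²` to `k` exactly when the sum is
`k` or `k + n` modulo `2n`; hence `N_{2n}(k) + N_{2n}(k + n) = 8 N_n(k)`.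

If `4 ∤ k` and `n = 8R`, every solution has an odd coordinate, and multiplying the first odd
coordinate by the unit `1 + 4R` adds `n` to its square modulo `2n`. So `N_{2n}(k + n) = N_{2n}(k)`,
and therefore `N_{2n}(k) = 4 N_n(k)`.

If `k = 4j`, every solution modulo `4n` is even. Doubling is `8`-to-`1` from triples modulo `4n`
onto the even ones, and a doubled triple `2v` solves `= 4j` iff `v` solves `= j` modulo `n`,
which `64 N_n(j)` triples do; so `N_{4n}(4j) = 8 N_n(j)`.

With a direct count for the moduli `2, 4, 8`, these recursions give `2^m ∣ N_{2^m}(k)`.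
-/

open Finset

namespace AddMonoidHom

variable {G H F : Type*} [AddGroup G] [Fintype G] [AddMonoid H] [Fintype H] [DecidableEq H]
  [FunLike F G H] [AddMonoidHomClass F G H]

theorem card_filter_comp_eq (f : F) {p : H → Prop} [DecidablePred p]
    (hp : ∀ h, p h → h ∈ Set.range f) :
    #{g | p (f g)} = #{h | p h} * #{g | f g = 0} := by
  rw [card_eq_sum_card_fiberwise (f := f) (t := {h | p h}) (fun g hg => by simpa using hg)]
  refine sum_const_nat fun h hh => ?_
  rw [mem_filter] at hh
  rw [filter_filter, ← card_fiber_eq_of_mem_range f (hp h hh.2) ⟨0, map_zero f⟩]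
  congr 1
  exact filter_congr fun g _ => ⟨And.right, fun hg => ⟨hg ▸ hh.2, hg⟩⟩

theorem card_ker_mul_card (f : F) (hf : Function.Surjective f) :
    #{g | f g = 0} * Fintype.card H = Fintype.card G := by
  simpa [mul_comm] using (card_filter_comp_eq f (p := fun _ => True) fun h _ => hf h).symm

end AddMonoidHom

def RingHom.prodMap₃ {R S : Type*} [NonAssocSemiring R] [NonAssocSemiring S] (f : R →+* S) :
    R × R × R →+* S × S × S :=
  f.prodMap (f.prodMap f)

@[simp]
theorem RingHom.prodMap₃_apply {R S : Type*} [NonAssocSemiring R] [NonAssocSemiring S]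
    (f : R →+* S) (v : R × R × R) : f.prodMap₃ v = (f v.1, f v.2.1, f v.2.2) :=
  rfl

def sumSq {R : Type*} [Semiring R] (v : R × R × R) : R := v.1 ^ 2 + v.2.1 ^ 2 + v.2.2 ^ 2

theorem map_sumSq {R S : Type*} [CommSemiring R] [CommSemiring S] (f : R →+* S) (v : R × R × R) :
    sumSq (f.prodMap₃ v) = f (sumSq v) := by
  simp [sumSq]

-- `Nat.card` involves no `Fintype` instance, so the modulus `n` can be rewritten freely.
noncomputable def numReps (n k : ℕ) : ℕ := Nat.card {v : ZMod n × ZMod n × ZMod n // sumSq v = k}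

theorem numReps_eq_card (n k : ℕ) [NeZero n] :
    numReps n k = #{v : ZMod n × ZMod n × ZMod n | sumSq v = k} := by
  rw [numReps, Nat.card_eq_fintype_card, Fintype.card_subtype]

namespace ZMod

theorem even_or_odd {n : ℕ} (x : ZMod n) : Even x ∨ Odd x := by
  rw [← intCast_zmod_cast x]
  exact (Int.even_or_odd _).imp (·.map (Int.castRingHom _)) (·.map (Int.castRingHom _))

theorem natCast_mul_eq_zero_iff {d n m : ℕ} [NeZero m] (h : d * n = m) (hd : 0 < d) (z : ZMod m) :
    (d : ZMod m) * z = 0 ↔ castHom (Dvd.intro_left d h) (ZMod n) z = 0 := by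
  subst h
  rw [← natCast_zmod_val z, ← Nat.cast_mul, natCast_eq_zero_iff, map_natCast, natCast_eq_zero_iff,
    Nat.mul_dvd_mul_iff_left hd]

theorem natCast_mul_eq_natCast_mul_iff {d n m : ℕ} [NeZero m] (h : d * n = m) (hd : 0 < d)
    (z : ZMod m) (j : ℕ) :
    (d : ZMod m) * z = (d * j : ℕ) ↔ castHom (Dvd.intro_left d h) (ZMod n) z = j := by
  rw [← sub_eq_zero, Nat.cast_mul, ← mul_sub, natCast_mul_eq_zero_iff h hd, map_sub, map_natCast,
    sub_eq_zero]

theorem castHom_eq_zero_iff {n : ℕ} [NeZero n] (w : ZMod (2 * n)) :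
    castHom (dvd_mul_left n 2) (ZMod n) w = 0 ↔ w = 0 ∨ w = n := by
  rw [castHom_apply, cast_eq_val, natCast_eq_zero_iff]
  have hw : w.val < 2 * n := val_lt w
  constructor
  · rintro ⟨q, hq⟩
    have hq2 : q < 2 := by nlinarith [NeZero.pos n]
    interval_cases q
    · exact Or.inl ((val_eq_zero w).1 (by simpa using hq))
    · right; rw [← natCast_zmod_val w, hq, mul_one]
  · rintro (rfl | rfl)
    · simp
    · rw [val_natCast, Nat.mod_eq_of_lt (by linarith [NeZero.pos n])]

theorem castHom_eq_natCast_iff {n : ℕ} [NeZero n] (z : ZMod (2 * n)) (k : ℕ) :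
    castHom (dvd_mul_left n 2) (ZMod n) z = k ↔ z = k ∨ z = k + n := by
  rw [← sub_eq_zero, ← map_natCast (castHom (dvd_mul_left n 2) (ZMod n)), ← map_sub,
    castHom_eq_zero_iff, sub_eq_zero, sub_eq_iff_eq_add']

end ZMod

theorem card_filter_castHom_comp {d n m : ℕ} [NeZero n] [NeZero m] (h : d * n = m)
    (p : ZMod n × ZMod n × ZMod n → Prop) [DecidablePred p] :
    #{v : ZMod m × ZMod m × ZMod m | p ((ZMod.castHom (Dvd.intro_left d h) (ZMod n)).prodMap₃ v)} =
      d ^ 3 * #{w | p w} := by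
  set f := (ZMod.castHom (Dvd.intro_left d h) (ZMod n)).prodMap₃
  have hf : Function.Surjective f := by
    have := ZMod.castHom_surjective (Dvd.intro_left d h)
    exact Prod.map_surjective.2 ⟨this, Prod.map_surjective.2 ⟨this, this⟩⟩
  have hker := AddMonoidHom.card_ker_mul_card f hf
  simp only [Fintype.card_prod, ZMod.card, ← h] at hker
  rw [AddMonoidHom.card_filter_comp_eq f fun w _ => hf w, mul_comm]
  congr 1
  exact Nat.eq_of_mul_eq_mul_right (pow_pos (NeZero.pos n) 3) (by linear_combination hker)

theorem not_odd_of_sumSq_eq_zero_of_zmod_four {v : ZMod 4 × ZMod 4 × ZMod 4} (hv : sumSq v = 0) :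
    ¬Odd v.1 ∧ ¬Odd v.2.1 ∧ ¬Odd v.2.2 := by
  have key : ∀ a b c r : ZMod 4, a ^ 2 + b ^ 2 + c ^ 2 = 0 →
      a ≠ 2 * r + 1 ∧ b ≠ 2 * r + 1 ∧ c ≠ 2 * r + 1 := by decide
  obtain ⟨a, b, c⟩ := v
  refine ⟨?_, ?_, ?_⟩ <;> rintro ⟨r, hr⟩
  exacts [(key a b c r hv).1 hr, (key a b c r hv).2.1 hr, (key a b c r hv).2.2 hr]

section FourDvd

variable {m : ℕ} {v : ZMod m × ZMod m × ZMod m}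

theorem even_of_sumSq_eq_four_mul (h4 : 4 ∣ m) {j : ZMod m} (hv : sumSq v = 4 * j) :
    Even v.1 ∧ Even v.2.1 ∧ Even v.2.2 := by
  set π := ZMod.castHom h4 (ZMod 4)
  have hπ : sumSq (π.prodMap₃ v) = 0 := by
    rw [map_sumSq, hv, map_mul, map_ofNat, show (4 : ZMod 4) = 0 from rfl, zero_mul]
  have hodd := not_odd_of_sumSq_eq_zero_of_zmod_four hπ
  have heven (x : ZMod m) (hx : ¬Odd (π x)) : Even x :=
    (ZMod.even_or_odd x).resolve_right fun h => hx (h.map π)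
  exact ⟨heven _ hodd.1, heven _ hodd.2.1, heven _ hodd.2.2⟩

theorem exists_odd_of_sumSq_eq (h4 : 4 ∣ m) {k : ℕ} (hk : ¬4 ∣ k) (hv : sumSq v = k) :
    Odd v.1 ∨ Odd v.2.1 ∨ Odd v.2.2 := by
  by_contra! hodd
  have heven (x : ZMod m) (hx : ¬Odd x) : Even x := (ZMod.even_or_odd x).resolve_right hx
  obtain ⟨a, ha⟩ := heven _ hodd.1
  obtain ⟨b, hb⟩ := heven _ hodd.2.1
  obtain ⟨c, hc⟩ := heven _ hodd.2.2
  have hv4 : (k : ZMod m) = 4 * sumSq (a, b, c) := by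
    rw [← hv, sumSq, sumSq, ha, hb, hc]; ring
  apply hk
  rw [← ZMod.natCast_eq_zero_iff, ← map_natCast (ZMod.castHom h4 (ZMod 4)), hv4, map_mul,
    map_ofNat, show (4 : ZMod 4) = 0 from rfl, zero_mul]

end FourDvd

section ScaleFirstOdd

variable {R : Type*} [CommRing R]

open Classical in
noncomputable def scaleFirstOdd (c : R) (v : R × R × R) : R × R × R :=
  if Odd v.1 then (c * v.1, v.2.1, v.2.2)
  else if Odd v.2.1 then (v.1, c * v.2.1, v.2.2)
  else (v.1, v.2.1, c * v.2.2)

theorem scaleFirstOdd_scaleFirstOdd {c c' : R} (hc : Odd c) (h : c' * c = 1)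
    (v : R × R × R) : scaleFirstOdd c' (scaleFirstOdd c v) = v := by
  obtain ⟨x, y, z⟩ := v
  unfold scaleFirstOdd
  by_cases hx : Odd x
  · simp [hx, hc.mul hx, ← mul_assoc, h]
  by_cases hy : Odd y
  · simp [hx, hy, hc.mul hy, ← mul_assoc, h]
  · simp [hx, hy, ← mul_assoc, h]

theorem sumSq_scaleFirstOdd {c e : R} (hc : ∀ x, Odd x → (c * x) ^ 2 = x ^ 2 + e)
    {v : R × R × R} (hv : Odd v.1 ∨ Odd v.2.1 ∨ Odd v.2.2) :
    sumSq (scaleFirstOdd c v) = sumSq v + e := by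
  obtain ⟨x, y, z⟩ := v
  unfold scaleFirstOdd sumSq
  by_cases hx : Odd x
  · simp only [hx, if_true, hc x hx]; ring
  by_cases hy : Odd y
  · simp only [hx, hy, if_true, if_false, hc y hy]; ring
  · simp only [hx, hy, if_false, hc z (by tauto)]; ring

end ScaleFirstOdd

theorem sixteen_mul_eq_zero (R : ℕ) : (16 * R : ZMod (16 * R)) = 0 := by
  exact_mod_cast ZMod.natCast_self (16 * R)

theorem mul_sq_of_odd {R : ℕ} {u x : ZMod (16 * R)} (hu : u ^ 2 = 1 + 8 * R) (hx : Odd x) :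
    (u * x) ^ 2 = x ^ 2 + 8 * R := by
  obtain ⟨t, rfl⟩ := hx
  linear_combination (2 * t + 1) ^ 2 * hu + 2 * (t ^ 2 + t) * sixteen_mul_eq_zero R

theorem numReps_add_eight_mul (R k : ℕ) [NeZero R] (hk : ¬4 ∣ k) :
    numReps (16 * R) (k + 8 * R) = numReps (16 * R) k := by
  have h16 := sixteen_mul_eq_zero R
  set c : ZMod (16 * R) := 1 + 4 * R
  have hc : c ^ 2 = 1 + 8 * R := by linear_combination R * h16
  have hc3 : (c ^ 3) ^ 2 = 1 + 8 * R := by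
    linear_combination (c ^ 4 + c ^ 2 * (1 + 8 * R) + (1 + 8 * R) ^ 2) * hc +
      (1 + 12 * R + 32 * R ^ 2) * h16
  -- `c ^ 4 = (1 + 8R) ^ 2 = 1`
  have hinv : c ^ 3 * c = 1 := by linear_combination (c ^ 2 + 1 + 8 * R) * hc + (1 + 4 * R) * h16
  have hodd : Odd c := ⟨2 * R, by ring⟩
  have h4 : 4 ∣ 16 * R := Dvd.intro (4 * R) (by ring)
  have hk' : ¬4 ∣ k + 8 * R := by omega
  rw [numReps_eq_card, numReps_eq_card]
  refine card_nbij' (scaleFirstOdd (c ^ 3)) (scaleFirstOdd c) ?_ ?_ ?_ ?_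
  · intro v hv
    simp only [coe_filter, mem_univ, true_and, Set.mem_ofPred_eq] at hv ⊢
    rw [sumSq_scaleFirstOdd (fun x => mul_sq_of_odd hc3) (exists_odd_of_sumSq_eq h4 hk' hv), hv]
    push_cast
    linear_combination h16
  · intro v hv
    simp only [coe_filter, mem_univ, true_and, Set.mem_ofPred_eq] at hv ⊢
    rw [sumSq_scaleFirstOdd (fun x => mul_sq_of_odd hc) (exists_odd_of_sumSq_eq h4 hk hv), hv]
    push_cast
    ring
  · exact fun v _ => scaleFirstOdd_scaleFirstOdd hodd.pow ((mul_comm _ _).trans hinv) v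
  · exact fun v _ => scaleFirstOdd_scaleFirstOdd hodd hinv v

theorem numReps_two_mul_add (n k : ℕ) [NeZero n] :
    numReps (2 * n) k + numReps (2 * n) (k + n) = 8 * numReps n k := by
  have hn : (n : ZMod (2 * n)) ≠ 0 := by
    rw [Ne, ZMod.natCast_eq_zero_iff]
    exact Nat.not_dvd_of_pos_of_lt (NeZero.pos n) (by linarith [NeZero.pos n])
  have hdisj : Disjoint (univ.filter fun v : ZMod (2 * n) × ZMod (2 * n) × ZMod (2 * n) =>
      sumSq v = k) (univ.filter fun v => sumSq v = (k + n : ℕ)) := by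
    rw [disjoint_filter]
    intro v _ h1 h2
    push_cast at h2
    exact hn (by linear_combination h1 - h2)
  calc numReps (2 * n) k + numReps (2 * n) (k + n)
      = #{v : ZMod (2 * n) × ZMod (2 * n) × ZMod (2 * n) |
          sumSq ((ZMod.castHom (dvd_mul_left n 2) (ZMod n)).prodMap₃ v) = k} := by
        rw [numReps_eq_card, numReps_eq_card, ← card_union_of_disjoint hdisj, ← filter_or]
        congr 1
        ext v
        simp only [mem_filter, mem_univ, true_and, map_sumSq, ZMod.castHom_eq_natCast_iff]
        rw [Nat.cast_add]
    _ = 2 ^ 3 * #{w : ZMod n × ZMod n × ZMod n | sumSq w = k} :=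
        card_filter_castHom_comp (d := 2) (n := n) rfl fun w => sumSq w = k
    _ = 8 * numReps n k := by rw [numReps_eq_card]; rfl

theorem numReps_four_mul (n j : ℕ) [NeZero n] :
    numReps (4 * n) (4 * j) = 8 * numReps n j := by
  let dbl := AddMonoidHom.mulLeft (2 : ZMod (4 * n) × ZMod (4 * n) × ZMod (4 * n))
  have hdbl (g : ZMod (4 * n) × ZMod (4 * n) × ZMod (4 * n)) :
      dbl g = (2 * g.1, 2 * g.2.1, 2 * g.2.2) := rfl
  have hrange (x) (hx : sumSq x = ((4 * j : ℕ) : ZMod (4 * n))) : x ∈ Set.range dbl := by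
    push_cast at hx
    obtain ⟨⟨a, ha⟩, ⟨b, hb⟩, ⟨c, hc⟩⟩ := even_of_sumSq_eq_four_mul (dvd_mul_right 4 n) hx
    exact ⟨(a, b, c), by rw [hdbl]; ext <;> simp [two_mul, ha, hb, hc]⟩
  have hsq : #{g | sumSq (dbl g) = ((4 * j : ℕ) : ZMod (4 * n))} =
      4 ^ 3 * #{w : ZMod n × ZMod n × ZMod n | sumSq w = j} := by
    rw [← card_filter_castHom_comp (d := 4) (n := n) rfl]
    congr 1
    ext g
    have h4 : sumSq (dbl g) = ((4 : ℕ) : ZMod (4 * n)) * sumSq g := by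
      rw [hdbl, sumSq, sumSq]; push_cast; ring
    simp only [mem_filter, mem_univ, true_and, map_sumSq, h4,
      ZMod.natCast_mul_eq_natCast_mul_iff rfl four_pos]
  have hker : #{g | dbl g = 0} = 2 ^ 3 := by
    have h := card_filter_castHom_comp (d := 2) (n := 2 * n) (m := 4 * n) (by ring) (· = 0)
    rw [filter_eq', if_pos (mem_univ _), card_singleton, mul_one] at h
    rw [← h]
    congr 1
    ext g
    simp only [mem_filter, mem_univ, true_and, hdbl, RingHom.prodMap₃_apply, Prod.ext_iff,
      Prod.fst_zero, Prod.snd_zero, Nat.cast_ofNat,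
      ← ZMod.natCast_mul_eq_zero_iff (by ring : 2 * (2 * n) = 4 * n) two_pos]
  have hcomp := AddMonoidHom.card_filter_comp_eq dbl hrange
  rw [hsq, hker] at hcomp
  rw [numReps_eq_card, numReps_eq_card]
  omega

theorem numReps_sixteen_mul (R k : ℕ) [NeZero R] (hk : ¬4 ∣ k) :
    numReps (16 * R) k = 4 * numReps (8 * R) k := by
  have h := numReps_two_mul_add (8 * R) k
  rw [show 2 * (8 * R) = 16 * R by ring, numReps_add_eight_mul R k hk] at h
  omega

set_option maxRecDepth 10000 in
theorem two_pow_dvd_numReps (m k : ℕ) : 2 ^ m ∣ numReps (2 ^ m) k := by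
  induction m using Nat.strong_induction_on generalizing k with
  | _ m ih =>
  obtain hm | hm := lt_or_ge m 4
  · interval_cases m
    · exact one_dvd _
    all_goals
      rw [numReps_eq_card]
      generalize (↑k : ZMod (2 ^ _)) = k
      revert k
      decide
  obtain ⟨r, rfl⟩ : ∃ r, m = r + 4 := ⟨m - 4, by omega⟩
  by_cases hk : 4 ∣ k
  · obtain ⟨j, rfl⟩ := hk
    rw [show 2 ^ (r + 4) = 4 * 2 ^ (r + 2) by ring, numReps_four_mul]
    exact mul_dvd_mul (by norm_num) (ih (r + 2) (by omega) j)
  · obtain ⟨c, hc⟩ := ih (r + 3) (by omega) k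
    rw [show 2 ^ (r + 4) = 16 * 2 ^ r by ring, numReps_sixteen_mul _ _ hk,
      show 8 * 2 ^ r = 2 ^ (r + 3) by ring, hc]
    exact ⟨2 * c, by ring⟩

theorem stmt_13_general (m : ℕ) (k : ZMod (2 ^ m)) :
    2 ^ m ∣ (Finset.univ.filter fun v : ZMod (2 ^ m) × ZMod (2 ^ m) × ZMod (2 ^ m) =>
      v.1 ^ 2 + v.2.1 ^ 2 + v.2.2 ^ 2 = k).card := by
  have h := two_pow_dvd_numReps m k.val
  rwa [numReps_eq_card, ZMod.natCast_zmod_val] at h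

theorem stmt_13 (m : ℕ) (hm : 1 ≤ m) (k : ZMod (2 ^ m)) :
    2 ^ m ∣ (Finset.univ.filter fun v : ZMod (2 ^ m) × ZMod (2 ^ m) × ZMod (2 ^ m) =>
      v.1 ^ 2 + v.2.1 ^ 2 + v.2.2 ^ 2 = k).card :=
  stmt_13_general m k
end
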